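/- The second homology of the group H presented on generators a,b,c,d,e,f with the six relators abcdef, ab⁻¹c²f⁻¹e²d⁻¹, a²fc²bed, ad⁻²cb⁻²ef⁻¹, ad²cf²eb², af⁻²cd⁻¹eb⁻² with integer coefficients vanishes, given that H is nontrivial (equivalently, the presentation 2-complex is aspherical with vanishing second homology since it has equal numbers of generators and relators and trivial abelianization). -/

import Mathlib

/-!
Let `R` be the normal closure of the relators in the free group `F` and `K = ⁅F, R⁆`. In `F ⧸ K`
the image of `R` is central, hence it is the abelian group generated by the images of the
relators: every `x ∈ R` is congruent modulo `K` to some `∏ rᵢ ^ nᵢ`. If also `x ∈ ⁅F, F⁆`, passing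
to the abelianization `ℤ⁶` gives `∑ nᵢ • rᵢ = 0`. The exponent-sum matrix of the relators is
invertible over `ℤ`, so every `nᵢ` vanishes and `x ∈ K`.
-/
namespace Stmt2

def a : FreeGroup (Fin 6) := FreeGroup.of 0
def b : FreeGroup (Fin 6) := FreeGroup.of 1
def c : FreeGroup (Fin 6) := FreeGroup.of 2
def d : FreeGroup (Fin 6) := FreeGroup.of 3
def e : FreeGroup (Fin 6) := FreeGroup.of 4
def f : FreeGroup (Fin 6) := FreeGroup.of 5

def rels : Set (FreeGroup (Fin 6)) :=
  { a * b * c * d * e * f,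
    a * b⁻¹ * c ^ 2 * f⁻¹ * e ^ 2 * d⁻¹,
    a ^ 2 * f * c ^ 2 * b * e * d,
    a * d⁻¹ ^ 2 * c * b⁻¹ ^ 2 * e * f⁻¹,
    a * d ^ 2 * c * f ^ 2 * e * b ^ 2,
    a * f⁻¹ ^ 2 * c * d⁻¹ * e * b⁻¹ ^ 2 }

abbrev H := PresentedGroup rels

open Subgroup
open scoped IsMulCommutative commutatorElement

section Hopf

variable {G : Type*} [Group G]

theorem mk_mem_center_of_mem {N : Subgroup G} [N.Normal] {x : G} (hx : x ∈ N) :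
    (x : G ⧸ ⁅(⊤ : Subgroup G), N⁆) ∈ center (G ⧸ ⁅(⊤ : Subgroup G), N⁆) := by
  rw [mem_center_iff]
  rintro ⟨y⟩
  have hyx : QuotientGroup.mk' _ ⁅y, x⁆ = 1 :=
    (QuotientGroup.eq_one_iff _).mpr (commutator_mem_commutator (mem_top y) hx)
  rw [map_commutatorElement] at hyx
  exact (commutatorElement_eq_one_iff_commute.mp hyx).eq

variable {ι : Type*} (r : ι → G)

def centralRelator (i : ι) :
    center (G ⧸ ⁅(⊤ : Subgroup G), normalClosure (Set.range r)⁆) :=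
  ⟨r i, mk_mem_center_of_mem (subset_normalClosure (Set.mem_range_self i))⟩

theorem exists_mk_eq_prod_zpow [Fintype ι] {x : G} (hx : x ∈ normalClosure (Set.range r)) :
    ∃ n : ι → ℤ, (x : G ⧸ ⁅(⊤ : Subgroup G), normalClosure (Set.range r)⁆) =
      ((∏ i, centralRelator r i ^ n i : center _) : G ⧸ _) := by
  set Q := G ⧸ ⁅(⊤ : Subgroup G), normalClosure (Set.range r)⁆
  let S : Subgroup Q := (closure (Set.range (centralRelator r))).map (center Q).subtype
  have : S.Normal := ⟨by
    rintro _ ⟨y, hy, rfl⟩ g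
    rw [coe_subtype, mem_center_iff.mp y.2 g, mul_inv_cancel_right]
    exact ⟨y, hy, rfl⟩⟩
  have hR : normalClosure (Set.range r) ≤ S.comap (QuotientGroup.mk' _) :=
    normalClosure_le_normal (by
      rintro _ ⟨i, rfl⟩
      exact ⟨centralRelator r i, subset_closure (Set.mem_range_self i), rfl⟩)
  obtain ⟨y, hy, hyx⟩ := hR hx
  obtain ⟨n, rfl⟩ := exists_of_mem_closure_range _ _ hy
  exact ⟨n, hyx.symm⟩

theorem normalClosure_inf_commutator_eq [Fintype ι]
    (hr : LinearIndependent ℤ fun i => Additive.ofMul (Abelianization.of (r i))) :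
    normalClosure (Set.range r) ⊓ commutator G =
      ⁅(⊤ : Subgroup G), normalClosure (Set.range r)⁆ := by
  refine le_antisymm ?_ (le_inf (commutator_le_right _ _) ?_)
  · rintro x ⟨hxR, hxC⟩
    obtain ⟨n, hn⟩ := exists_mk_eq_prod_zpow r hxR
    let ab : G ⧸ ⁅(⊤ : Subgroup G), normalClosure (Set.range r)⁆ →* Abelianization G :=
      QuotientGroup.lift _ Abelianization.of (by
        rw [Abelianization.ker_of, _root_.commutator_def]
        exact commutator_mono le_rfl le_top)
    have hprod : ∏ i, Abelianization.of (r i) ^ n i = 1 :=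
      calc ∏ i, Abelianization.of (r i) ^ n i
          = ab.comp (center _).subtype (∏ i, centralRelator r i ^ n i) := by
            simp [map_prod, ab, centralRelator]
        _ = Abelianization.of x := by rw [MonoidHom.comp_apply, coe_subtype, ← hn]; rfl
        _ = 1 := by rwa [← MonoidHom.mem_ker, Abelianization.ker_of]
    have hsum : ∑ i, n i • Additive.ofMul (Abelianization.of (r i)) = 0 := by
      simpa using congrArg Additive.ofMul hprod
    have hn0 : n = 0 := funext (Fintype.linearIndependent_iff.mp hr n hsum)
    rw [← QuotientGroup.eq_one_iff, hn, hn0]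
    simp
  · rw [_root_.commutator_def]
    exact commutator_mono le_rfl le_top

end Hopf

def expSum {ι : Type*} [DecidableEq ι] : FreeGroup ι →* Multiplicative (ι → ℤ) :=
  FreeGroup.lift fun i => Multiplicative.ofAdd (Pi.single i 1)

def relator : Fin 6 → FreeGroup (Fin 6) :=
  ![a * b * c * d * e * f,
    a * b⁻¹ * c ^ 2 * f⁻¹ * e ^ 2 * d⁻¹,
    a ^ 2 * f * c ^ 2 * b * e * d,
    a * d⁻¹ ^ 2 * c * b⁻¹ ^ 2 * e * f⁻¹,
    a * d ^ 2 * c * f ^ 2 * e * b ^ 2,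
    a * f⁻¹ ^ 2 * c * d⁻¹ * e * b⁻¹ ^ 2]

theorem range_relator : Set.range relator = rels := by
  simp only [relator, Matrix.range_cons, Matrix.range_empty, Set.union_empty, Set.singleton_union]
  rfl

def expSumMatrix : Matrix (Fin 6) (Fin 6) ℤ :=
  !![1, 1, 1, 1, 1, 1;
     1, -1, 2, -1, 2, -1;
     2, 1, 2, 1, 1, 1;
     1, -2, 1, -2, 1, -1;
     1, 2, 1, 2, 1, 2;
     1, -2, 1, -1, 1, -2]

theorem toAdd_expSum_relator (i : Fin 6) :
    Multiplicative.toAdd (expSum (relator i)) = expSumMatrix i := by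
  fin_cases i <;> ext j <;> fin_cases j <;>
    simp [expSum, relator, expSumMatrix, a, b, c, d, e, f]

theorem isUnit_expSumMatrix : IsUnit expSumMatrix :=
  IsUnit.of_mul_eq_one
    !![5, -1, 0, 0, -3, 0;
       7, 0, 0, -1, -5, -1;
       -6, 1, 1, 0, 3, 0;
       -4, 0, 0, 0, 3, 1;
       3, 0, -1, 0, -1, 0;
       -4, 0, 0, 1, 3, 0]
    (by decide)

theorem linearIndependent_relator :
    LinearIndependent ℤ fun i => Additive.ofMul (Abelianization.of (relator i)) := by
  let toZn :=
    (MonoidHom.toAdditiveLeft (Abelianization.lift (expSum (ι := Fin 6)))).toIntLinearMap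
  refine LinearIndependent.of_comp toZn ?_
  have hrows : ⇑toZn ∘ (fun i => Additive.ofMul (Abelianization.of (relator i))) =
      expSumMatrix.row := funext toAdd_expSum_relator
  rw [hrows]
  exact Matrix.linearIndependent_rows_of_isUnit isUnit_expSumMatrix

theorem H2_of_H_trivial_general :
    Subgroup.normalClosure rels ⊓ commutator (FreeGroup (Fin 6)) =
      ⁅(⊤ : Subgroup (FreeGroup (Fin 6))), Subgroup.normalClosure rels⁆ := by
  rw [← range_relator]
  exact normalClosure_inf_commutator_eq relator linearIndependent_relator

/-- `H₂(H;ℤ) = 0`, expressed via the Hopf formula: for the presentation `H = F/R`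
(where `F` is free on six generators and `R` is the normal closure of the six relators),
`H₂(H;ℤ) ≅ (R ∩ [F,F]) / [F,R]`; so the vanishing of `H₂(H;ℤ)` says exactly that
`R ∩ [F,F] = [F,R]`. -/
theorem H2_of_H_trivial (hH : Nontrivial H) :
    Subgroup.normalClosure rels ⊓ commutator (FreeGroup (Fin 6)) =
      ⁅(⊤ : Subgroup (FreeGroup (Fin 6))), Subgroup.normalClosure rels⁆ :=
  H2_of_H_trivial_general

end Stmt2
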